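/- arXiv:2602.10466 — 7 statements merged into one kernel-verified Lean document; each statement's English description precedes it below -/
import Mathlib

section
/- For natural numbers m and n, if m ≡ n (mod 2^k), then the sequence of parities of the iterates T^0, T^1, ..., T^{k-1} applied to m agrees with that applied to n; that is, for all j < k, T^j(m) ≡ T^j(n) (mod 2). -/
/-- The modified Collatz function. -/
def T (n : ℕ) : ℕ := if n % 2 = 0 then n / 2 else (3 * n + 1) / 2

/-!
Halving an even number loses exactly one binary digit of the modulus, so `T` maps residues
mod `2 ^ (k + 1)` to residues mod `2 ^ k`, the branch taken being fixed by the lowest digit.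
Iterating, the residue of `m` mod `2 ^ k` determines `T^[j] m` mod `2` for every `j < k`.
-/

theorem Nat.ModEq.div_of_dvd {c x y n : ℕ} (hx : c ∣ x) (hy : c ∣ y) (h : x ≡ y [MOD c * n]) :
    x / c ≡ y / c [MOD n] := by
  rcases Nat.eq_zero_or_pos c with rfl | hc
  · simp only [Nat.div_zero, Nat.ModEq.refl]
  obtain ⟨a, rfl⟩ := hx
  obtain ⟨b, rfl⟩ := hy
  rw [Nat.mul_div_cancel_left a hc, Nat.mul_div_cancel_left b hc]
  exact (Nat.ModEq.mul_left_cancel_iff' hc.ne').mp h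

theorem T_modEq {k m n : ℕ} (h : m ≡ n [MOD 2 ^ (k + 1)]) : T m ≡ T n [MOD 2 ^ k] := by
  have hparity : m % 2 = n % 2 := h.of_dvd (dvd_pow_self 2 k.succ_ne_zero)
  rw [pow_succ'] at h
  unfold T
  by_cases hm : m % 2 = 0
  · rw [if_pos hm, if_pos (hparity ▸ hm)]
    exact h.div_of_dvd (by omega) (by omega)
  · rw [if_neg hm, if_neg (hparity ▸ hm)]
    exact ((h.mul_left 3).add_right 1).div_of_dvd (by omega) (by omega)

theorem iterate_T_modEq {j k m n : ℕ} (h : m ≡ n [MOD 2 ^ (j + k)]) :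
    T^[j] m ≡ T^[j] n [MOD 2 ^ k] := by
  induction j generalizing m n with
  | zero => simpa using h
  | succ j ih =>
    rw [Function.iterate_succ_apply, Function.iterate_succ_apply]
    exact ih (T_modEq (by rwa [Nat.add_right_comm] at h))

theorem parity_sequence_of_congruent (k : ℕ) (m n : ℕ)
    (h : m % 2 ^ k = n % 2 ^ k) :
    ∀ j < k, (T^[j] m) % 2 = (T^[j] n) % 2 := by
  intro j hj
  have hmod : m ≡ n [MOD 2 ^ (j + 1)] := Nat.ModEq.of_dvd (Nat.pow_dvd_pow 2 hj) h
  simpa [Nat.ModEq] using iterate_T_modEq (k := 1) hmod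
end

section
/- Let n = n0 + a·2^k for naturals n0, a, k, and let f = f_k(n0) be the number of odd integers among n0, T(n0), ..., T^{k-1}(n0). Then T^k(n) = T^k(n0) + 3^f · a. -/
/-- `f k m` is the number of indices `0 ≤ j < k` with `T^[j] m` odd. -/
def f (k m : ℕ) : ℕ := ((Finset.range k).filter (fun j => Odd (T^[j] m))).card

/-! Adding `2 * b` to `m` keeps its parity, so `T` acts on both by the same affine map, whose
slope is `1/2` or `3/2`: the difference `2 * b` becomes `b` or `3 * b`. Iterating `k` times, the
difference `a * 2 ^ k` is halved `k` times and tripled once per odd iterate of `n0`. -/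

lemma T_add_two_mul_of_even {m : ℕ} (hm : Even m) (b : ℕ) : T (m + 2 * b) = T m + b := by
  have hm2 : m % 2 = 0 := Nat.even_iff.mp hm
  simp only [T, Nat.add_mul_mod_self_left, hm2, if_true]
  omega

lemma T_add_two_mul_of_odd {m : ℕ} (hm : Odd m) (b : ℕ) : T (m + 2 * b) = T m + 3 * b := by
  have hm2 : m % 2 = 1 := Nat.odd_iff.mp hm
  simp only [T, Nat.add_mul_mod_self_left, hm2, one_ne_zero, if_false]
  omega

lemma f_succ (k m : ℕ) : f (k + 1) m = f k m + if Odd (T^[k] m) then 1 else 0 := by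
  rw [f, f, Finset.range_add_one, Finset.filter_insert]
  split_ifs <;> simp [Finset.card_insert_of_notMem]

theorem iterate_add_multiple_pow (n0 a k : ℕ) :
    T^[k] (n0 + a * 2 ^ k) = T^[k] n0 + 3 ^ (f k n0) * a := by
  induction k generalizing a with
  | zero => simp [f]
  | succ k ih =>
    have hstep : T^[k] (n0 + a * 2 ^ (k + 1)) = T^[k] n0 + 2 * (3 ^ f k n0 * a) := by
      rw [show a * 2 ^ (k + 1) = 2 * a * 2 ^ k by ring, ih]
      ring
    rw [Function.iterate_succ_apply', Function.iterate_succ_apply', hstep, f_succ]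
    rcases Nat.even_or_odd (T^[k] n0) with heven | hodd
    · rw [T_add_two_mul_of_even heven, if_neg (Nat.not_odd_iff_even.mpr heven), add_zero]
    · rw [T_add_two_mul_of_odd hodd, if_pos hodd, pow_succ]
      ring
end

section
/- Suppose n1 = n0 + a·2^k with a ≥ 0 and n0 ≥ 1, and suppose T^k(n0) < n0. Then T^k(n1) < n1. -/
/-!
Adding `a * 2 ^ k` to `n` does not change the parities of the first `k` iterates, so along the
trajectory the perturbation is halved at each even step and multiplied by `3/2` at each odd step:
`T^[k] (n + a * 2 ^ k) = T^[k] n + a * 3 ^ j`, with `j` the number of odd steps. Since `T m ≥ m / 2`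
at even steps and `T m ≥ 3 m / 2` at odd ones, `3 ^ j * n ≤ 2 ^ k * T^[k] n`; so `T^[k] n < n`
forces `3 ^ j < 2 ^ k`, and the perturbation shrinks too.
-/

/-- The number of odd terms among `n, T n, …, T^[k-1] n`. -/
def oddSteps : ℕ → ℕ → ℕ
  | 0, _ => 0
  | k + 1, n => n % 2 + oddSteps k (T n)

lemma T_add_two_mul (n m : ℕ) : T (n + 2 * m) = T n + 3 ^ (n % 2) * m := by
  rcases Nat.mod_two_eq_zero_or_one n with h | h <;>
    simp only [T, h, Nat.add_mul_mod_self_left, one_ne_zero, if_true, if_false, pow_zero,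
      pow_one] <;> omega

lemma three_pow_mod_two_mul_le_two_mul_T (n : ℕ) : 3 ^ (n % 2) * n ≤ 2 * T n := by
  rcases Nat.mod_two_eq_zero_or_one n with h | h <;>
    simp only [T, h, one_ne_zero, if_true, if_false, pow_zero, pow_one] <;> omega

lemma iterate_T_add_mul_two_pow (k n a : ℕ) :
    T^[k] (n + a * 2 ^ k) = T^[k] n + a * 3 ^ oddSteps k n := by
  induction k generalizing n a with
  | zero => simp [oddSteps]
  | succ k ih =>
    have hstep : T (n + a * 2 ^ (k + 1)) = T n + 3 ^ (n % 2) * a * 2 ^ k := by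
      rw [pow_succ, mul_comm (2 ^ k), ← mul_assoc, mul_comm a, mul_assoc, T_add_two_mul,
        mul_assoc]
    rw [Function.iterate_succ_apply, Function.iterate_succ_apply, hstep, ih, oddSteps, pow_add]
    ring

lemma three_pow_oddSteps_mul_le (k n : ℕ) : 3 ^ oddSteps k n * n ≤ 2 ^ k * T^[k] n := by
  induction k generalizing n with
  | zero => simp [oddSteps]
  | succ k ih =>
    rw [oddSteps, Function.iterate_succ_apply]
    calc 3 ^ (n % 2 + oddSteps k (T n)) * n
        = 3 ^ oddSteps k (T n) * (3 ^ (n % 2) * n) := by ring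
      _ ≤ 3 ^ oddSteps k (T n) * (2 * T n) :=
        Nat.mul_le_mul_left _ (three_pow_mod_two_mul_le_two_mul_T n)
      _ = 2 * (3 ^ oddSteps k (T n) * T n) := by ring
      _ ≤ 2 * (2 ^ k * T^[k] (T n)) := Nat.mul_le_mul_left _ (ih (T n))
      _ = 2 ^ (k + 1) * T^[k] (T n) := by ring

theorem descent_sieve_general (n0 n1 a k : ℕ)
    (h1 : n1 = n0 + a * 2 ^ k) (h : T^[k] n0 < n0) :
    T^[k] n1 < n1 := by
  subst h1
  rw [iterate_T_add_mul_two_pow]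
  have hpow : 3 ^ oddSteps k n0 < 2 ^ k :=
    Nat.lt_of_mul_lt_mul_right <| calc
      3 ^ oddSteps k n0 * n0 ≤ 2 ^ k * T^[k] n0 := three_pow_oddSteps_mul_le k n0
      _ < 2 ^ k * n0 := Nat.mul_lt_mul_of_pos_left h (by positivity)
  have := Nat.mul_le_mul_left a hpow.le
  omega

theorem descent_sieve (n0 n1 a k : ℕ) (hn0 : 1 ≤ n0)
    (h1 : n1 = n0 + a * 2 ^ k) (h : T^[k] n0 < n0) :
    T^[k] n1 < n1 :=
  descent_sieve_general n0 n1 a k h1 h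
end

section
/- Let n be a positive integer and k ≥ 1 with f_k(n) ≥ 1 (at least one odd step occurs among the first k iterates of T). Let j < k be the largest index with T^j(n) odd. Then T^k(n) ≡ 2 (mod 3) if and only if k − 1 − j is even. -/
/-! Modulo 3, an odd step always lands on 2, while an even step `2a ↦ a` multiplies the residue
by `2 ≡ 2⁻¹`. After the last odd step the residue is therefore
`2 · 2 ^ (k - 1 - j) ≡ 2 · (-1) ^ (k - 1 - j)`. -/

theorem T_mod_three_of_odd {m : ℕ} (hm : Odd m) : T m % 3 = 2 := by
  obtain ⟨a, rfl⟩ := hm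
  unfold T
  split <;> omega

theorem T_mod_three_of_even {m : ℕ} (hm : Even m) : T m % 3 = 2 * m % 3 := by
  obtain ⟨a, rfl⟩ := hm
  unfold T
  split <;> omega

theorem iterate_T_mod_three_of_forall_even {m d : ℕ} (heven : ∀ i < d, Even (T^[i] m)) :
    T^[d] m % 3 = 2 ^ d * m % 3 := by
  induction d with
  | zero => simp
  | succ d ih =>
    rw [Function.iterate_succ_apply', T_mod_three_of_even (heven d d.lt_succ_self), Nat.mul_mod,
      ih fun i hi => heven i (hi.trans d.lt_succ_self), ← Nat.mul_mod, pow_succ]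
    ring_nf

theorem two_pow_succ_mod_three_eq_two_iff (d : ℕ) : 2 ^ (d + 1) % 3 = 2 ↔ Even d := by
  rcases Nat.even_or_odd' d with ⟨r, rfl | rfl⟩ <;>
    simp [pow_succ, pow_mul, Nat.mul_mod, Nat.pow_mod]

theorem mod_three_from_last_odd_step_general (n k j : ℕ)
    (hj : j < k) (hodd : Odd (T^[j] n))
    (hlast : ∀ i, j < i → i < k → ¬ Odd (T^[i] n)) :
    T^[k] n % 3 = 2 ↔ Even (k - 1 - j) := by
  set d := k - 1 - j
  have hk : k = d + (j + 1) := by omega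
  have heven : ∀ i < d, Even (T^[i] (T^[j + 1] n)) := fun i hi => by
    rw [← Function.iterate_add_apply, ← Nat.not_odd_iff_even]
    exact hlast _ (by omega) (by omega)
  have hstep : T^[j + 1] n % 3 = 2 := by
    rw [Function.iterate_succ_apply']
    exact T_mod_three_of_odd hodd
  rw [hk, Function.iterate_add_apply, iterate_T_mod_three_of_forall_even heven, Nat.mul_mod, hstep,
    ← two_pow_succ_mod_three_eq_two_iff, pow_succ, Nat.mul_mod (2 ^ d)]

theorem mod_three_from_last_odd_step (n k j : ℕ) (hn : 1 ≤ n) (hk : 1 ≤ k)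
    (hj : j < k) (hodd : Odd (T^[j] n))
    (hlast : ∀ i, j < i → i < k → ¬ Odd (T^[i] n)) :
    T^[k] n % 3 = 2 ↔ Even (k - 1 - j) :=
  mod_three_from_last_odd_step_general n k j hj hodd hlast
end

section
/- Suppose m is a positive odd integer such that T^ℓ(m) is odd for 0 ≤ ℓ < L for some L ≥ 1, and T^L(m) and T^{L+1}(m) are both even. Then the trajectory of m under T meets the trajectory of (m−1)/2; specifically, there exist j, j' such that T^j(m) = T^{j'}((m−1)/2). -/
lemma T_of_even {n : ℕ} (h : Even n) : T n = n / 2 := by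
  simp [T, Nat.even_iff.mp h]

lemma T_of_odd {n : ℕ} (h : Odd n) : T n = (3 * n + 1) / 2 := by
  simp [T, Nat.odd_iff.mp h]

lemma T_two_mul_add_one (n : ℕ) : T (2 * n + 1) = 3 * n + 2 := by
  rw [T_of_odd (odd_two_mul_add_one n)]
  omega

lemma T_three_mul_add_two {y : ℕ} (h : Odd (3 * y + 2)) : T (3 * y + 2) = 3 * T y + 2 := by
  obtain ⟨k, rfl⟩ : Odd y := by
    rcases h with ⟨k, hk⟩
    exact ⟨(k - 1) / 3, by omega⟩
  rw [T_of_odd h, T_of_odd (odd_two_mul_add_one k)]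
  omega

lemma iterate_T_three_mul_add_two {y k : ℕ} (hodd : ∀ l < k, Odd (T^[l] (3 * y + 2))) :
    T^[k] (3 * y + 2) = 3 * T^[k] y + 2 := by
  induction k with
  | zero => rfl
  | succ k ih =>
    have ih := ih fun l hl => hodd l (by omega)
    have hk := hodd k (by omega)
    rw [ih] at hk
    rw [Function.iterate_succ_apply', Function.iterate_succ_apply', ih, T_three_mul_add_two hk]

lemma T_T_three_mul_add_two_of_even {a : ℕ} (h₁ : Even (3 * a + 2)) (h₂ : Even (T (3 * a + 2))) :
    T (T (3 * a + 2)) = T (T a) := by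
  obtain ⟨b, rfl⟩ : ∃ b, a = 2 * b := by
    rcases h₁ with ⟨k, hk⟩
    exact ⟨(k - 1) / 3, by omega⟩
  have hT : T (3 * (2 * b) + 2) = 3 * b + 1 := by
    rw [T_of_even h₁]
    omega
  have hTa : T (2 * b) = b := by
    rw [T_of_even (even_two_mul b)]
    omega
  have hb : Odd b := by
    rw [hT] at h₂
    rcases h₂ with ⟨k, hk⟩
    exact ⟨(k - 2) / 3, by omega⟩
  rw [hT, hTa, T_of_even (hT ▸ h₂), T_of_odd hb]

theorem odd_even_even_sieve_general (m L : ℕ) (hL : 1 ≤ L)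
    (hodd : ∀ l < L, Odd (T^[l] m))
    (he1 : Even (T^[L] m)) (he2 : Even (T^[L + 1] m)) :
    ∃ j j' : ℕ, T^[j] m = T^[j'] ((m - 1) / 2) := by
  obtain ⟨K, rfl⟩ : ∃ K, L = K + 1 := ⟨L - 1, by omega⟩
  set n := (m - 1) / 2
  have hTm : T m = 3 * n + 2 := by
    have hm : m % 2 = 1 := Nat.odd_iff.mp (hodd 0 (by omega))
    rw [show m = 2 * n + 1 by omega, T_two_mul_add_one]
  have hstart : T^[K + 1] m = 3 * T^[K] n + 2 := by
    rw [Function.iterate_succ_apply, hTm]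
    refine iterate_T_three_mul_add_two fun l hl => ?_
    simpa only [Function.iterate_succ_apply, hTm] using hodd (l + 1) (by omega)
  rw [hstart] at he1
  rw [Function.iterate_succ_apply', hstart] at he2
  refine ⟨2 + (K + 1), 2 + K, ?_⟩
  rw [Function.iterate_add_apply, hstart, Function.iterate_add_apply]
  exact T_T_three_mul_add_two_of_even he1 he2

theorem odd_even_even_sieve (m L : ℕ) (hm : 1 ≤ m) (hL : 1 ≤ L)
    (hodd : ∀ l < L, Odd (T^[l] m))
    (he1 : Even (T^[L] m)) (he2 : Even (T^[L + 1] m)) :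
    ∃ j j' : ℕ, T^[j] m = T^[j'] ((m - 1) / 2) :=
  odd_even_even_sieve_general m L hL hodd he1 he2
end

section
/- Suppose n is a positive integer, k and f = f_k(n) satisfy 485·f ≤ 306·k, and T^m(n) ≥ 99781 for all 0 ≤ m ≤ k with k ≥ 1. Then T^k(n) < n. -/
/-!
An odd step multiplies by `(3m+1)/(2m) ≤ (3N+1)/(2N)` as long as `m ≥ N`, and an even step
halves, so `2^k N^f T^k(n) ≤ (3N+1)^f n`. For `N = 99781` the inequality
`(3N+1)^306 < N^306 2^485` together with `485 f ≤ 306 k` makes `(3N+1)^f < N^f 2^k`.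
-/

lemma two_mul_T_of_even {m : ℕ} (h : Even m) : 2 * T m = m := by
  rw [T, if_pos (Nat.even_iff.1 h)]
  exact Nat.mul_div_cancel' (even_iff_two_dvd.1 h)

lemma two_mul_T_of_odd {m : ℕ} (h : Odd m) : 2 * T m = 3 * m + 1 := by
  obtain ⟨r, rfl⟩ := h
  rw [T, if_neg (by omega)]
  omega

lemma two_mul_mul_T_le_of_odd {N m : ℕ} (h : Odd m) (hN : N ≤ m) :
    2 * N * T m ≤ (3 * N + 1) * m := by
  calc 2 * N * T m = N * (3 * m + 1) := by rw [mul_comm 2 N, mul_assoc, two_mul_T_of_odd h]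
    _ ≤ (3 * N + 1) * m := by nlinarith

lemma two_pow_mul_pow_f_mul_T_iterate_le {N n k : ℕ} (hbig : ∀ m < k, N ≤ T^[m] n) :
    2 ^ k * N ^ f k n * T^[k] n ≤ (3 * N + 1) ^ f k n * n := by
  induction k with
  | zero => simp [f]
  | succ k ih =>
    have ih := ih fun m hm => hbig m (by omega)
    set m := T^[k] n
    rw [f_succ, Function.iterate_succ_apply']
    split_ifs with hodd
    · calc 2 ^ (k + 1) * N ^ (f k n + 1) * T m
          = 2 ^ k * N ^ f k n * (2 * N * T m) := by ring
        _ ≤ 2 ^ k * N ^ f k n * ((3 * N + 1) * m) :=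
          Nat.mul_le_mul_left _ (two_mul_mul_T_le_of_odd hodd (hbig k (by omega)))
        _ = (3 * N + 1) * (2 ^ k * N ^ f k n * m) := by ring
        _ ≤ (3 * N + 1) * ((3 * N + 1) ^ f k n * n) := by gcongr
        _ = (3 * N + 1) ^ (f k n + 1) * n := by ring
    · calc 2 ^ (k + 1) * N ^ (f k n + 0) * T m
          = 2 ^ k * N ^ f k n * (2 * T m) := by ring
        _ = 2 ^ k * N ^ f k n * m := by rw [two_mul_T_of_even (Nat.not_odd_iff_even.1 hodd)]
        _ ≤ (3 * N + 1) ^ f k n * n := ih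

lemma pow_lt_pow_mul_two_pow_of_rate {x y p q F k : ℕ} (hrate : x ^ p < y ^ p * 2 ^ q)
    (hFk : q * F ≤ p * k) (hk : 1 ≤ k) : x ^ F < y ^ F * 2 ^ k := by
  rcases Nat.eq_zero_or_pos F with rfl | hF
  · simpa using Nat.one_lt_two_pow_iff.2 (by omega)
  refine lt_of_pow_lt_pow_left₀ p (by positivity) ?_
  calc (x ^ F) ^ p = (x ^ p) ^ F := by rw [← pow_mul, ← pow_mul, mul_comm]
    _ < (y ^ p * 2 ^ q) ^ F := Nat.pow_lt_pow_left hrate hF.ne'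
    _ = (y ^ F) ^ p * 2 ^ (q * F) := by ring
    _ ≤ (y ^ F) ^ p * 2 ^ (p * k) := by gcongr; norm_num
    _ = (y ^ F * 2 ^ k) ^ p := by ring

theorem descent_from_rational_approx_general (n k : ℕ) (hk : 1 ≤ k)
    (hf : 485 * f k n ≤ 306 * k)
    (hbig : ∀ m ≤ k, 99781 ≤ T^[m] n) :
    T^[k] n < n := by
  have hgrowth := two_pow_mul_pow_f_mul_T_iterate_le (N := 99781) (n := n) (k := k)
    fun m hm => hbig m hm.le
  have hrate : (3 * 99781 + 1) ^ f k n < 99781 ^ f k n * 2 ^ k :=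
    pow_lt_pow_mul_two_pow_of_rate (p := 306) (q := 485) (by decide +kernel) hf hk
  have hn : 0 < n := lt_of_lt_of_le (by norm_num) (hbig 0 k.zero_le)
  refine lt_of_mul_lt_mul_left (a := 2 ^ k * 99781 ^ f k n) ?_ (Nat.zero_le _)
  calc 2 ^ k * 99781 ^ f k n * T^[k] n ≤ (3 * 99781 + 1) ^ f k n * n := hgrowth
    _ < 99781 ^ f k n * 2 ^ k * n := Nat.mul_lt_mul_of_pos_right hrate hn
    _ = 2 ^ k * 99781 ^ f k n * n := by ring

theorem descent_from_rational_approx (n k : ℕ) (hn : 0 < n) (hk : 1 ≤ k)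
    (hf : 485 * f k n ≤ 306 * k)
    (hbig : ∀ m ≤ k, 99781 ≤ T^[m] n) :
    T^[k] n < n :=
  descent_from_rational_approx_general n k hk hf hbig
end

section
/- For every natural number M ≥ 1, the map from Z/2^M to (Z/2)^M sending n to the sequence of parities (T^0(n) mod 2, T^1(n) mod 2, ..., T^{M−1}(n) mod 2) is a bijection. -/
lemma two_mul_T (n : ℕ) : 2 * T n = (2 * (n % 2) + 1) * n + n % 2 := by
  rcases Nat.mod_two_eq_zero_or_one n with h | h <;> simp [T, h] <;> omega

lemma modEq_two_pow_succ_of_T_modEq {n m k : ℕ} (hpar : n % 2 = m % 2)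
    (hT : T n ≡ T m [MOD 2 ^ k]) : n ≡ m [MOD 2 ^ (k + 1)] := by
  have h2T : 2 * T n ≡ 2 * T m [MOD 2 ^ (k + 1)] := by
    rw [pow_succ']
    exact hT.mul_left' 2
  rw [two_mul_T, two_mul_T, hpar] at h2T
  have hcop : Nat.Coprime (2 ^ (k + 1)) (2 * (m % 2) + 1) :=
    Nat.Coprime.pow_left _ (Nat.coprime_two_left.mpr (odd_two_mul_add_one _))
  exact (h2T.add_right_cancel' _).cancel_left_of_coprime hcop

lemma modEq_two_pow_of_iterate_T_mod_two_eq (k : ℕ) {n m : ℕ}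
    (h : ∀ i < k, T^[i] n % 2 = T^[i] m % 2) : n ≡ m [MOD 2 ^ k] := by
  induction k generalizing n m with
  | zero => exact Nat.modEq_one
  | succ k ih =>
    refine modEq_two_pow_succ_of_T_modEq (h 0 k.succ_pos) (ih fun i hi => ?_)
    simpa only [Function.iterate_succ_apply] using h (i + 1) (by omega)

theorem parity_sequence_bijective_general (M : ℕ) :
    Function.Bijective
      (fun n : ZMod (2 ^ M) => fun i : Fin M =>
        ((T^[(i : ℕ)] n.val) % 2 : ZMod 2)) := by
  rw [Fintype.bijective_iff_injective_and_card]
  refine ⟨fun a b hab => ZMod.val_injective _ ?_, by simp [ZMod.card]⟩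
  have hpar : ∀ i < M, T^[i] a.val % 2 = T^[i] b.val % 2 := fun i hi => by
    have h := congrFun hab ⟨i, hi⟩
    -- `% 2` is the Euclidean remainder of the field `ZMod 2`, where `2 = 0`, so it is the identity.
    simp only [show (2 : ZMod 2) = 0 from rfl, EuclideanDomain.mod_zero] at h
    exact (ZMod.natCast_eq_natCast_iff' _ _ 2).mp h
  exact (modEq_two_pow_of_iterate_T_mod_two_eq M hpar).eq_of_lt_of_lt (ZMod.val_lt a) (ZMod.val_lt b)

theorem parity_sequence_bijective (M : ℕ) (hM : 1 ≤ M) :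
    Function.Bijective
      (fun n : ZMod (2 ^ M) => fun i : Fin M =>
        ((T^[(i : ℕ)] n.val) % 2 : ZMod 2)) :=
  parity_sequence_bijective_general M
end
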